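/- Sandwiching of the correlated-policy value (Lemma B.3): in the setting described in the context, assume the confidence-set conditions ‖θ̄_h − θ*_h‖_{Σ̄_h} ≤ β and ‖θ̲_h − θ*_h‖_{Σ̲_h} ≤ β hold for every h ∈ {1,…,H}. Define the value of the correlated joint policy μ = (μ_h) by backward recursion: V_{H+1}^μ = 0; Q_h^μ(s,a,b) = r_h(s,a,b) + Σ_{s'} P_h(s'|s,a,b) V_{h+1}^μ(s'); V_h^μ(s) = Σ_{(a,b)} μ_h(a,b|s) Q_h^μ(s,a,b). Then for all h ∈ {1,…,H}, all s ∈ S, a ∈ A, b ∈ B: Q̲_h(s,a,b) ≤ Q_h^μ(s,a,b) ≤ Q̄_h(s,a,b), and V̲_h(s) ≤ V_h^μ(s) ≤ V̄_h(s). -/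

import Mathlib

open BigOperators Finset Matrix

/-- Projection of `x : ℝ` onto the interval `[l, u]`. -/
noncomputable def clip (l u x : ℝ) : ℝ := max l (min x u)

/-- Weighted (semi-)norm `‖x‖_M = √(xᵀ M x)`. -/
noncomputable def wnorm {d : ℕ} (M : Matrix (Fin d) (Fin d) ℝ) (x : Fin d → ℝ) : ℝ :=
  Real.sqrt (x ⬝ᵥ M.mulVec x)

/-- Rewards in `[-1,1]` and transition kernels that are probability mass functions. -/
def IsGame {S A B : Type*} [Fintype S]
    (r : ℕ → S → A → B → ℝ) (P : ℕ → S → A → B → S → ℝ) : Prop :=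
  (∀ h s a b, -1 ≤ r h s a b ∧ r h s a b ≤ 1) ∧
  (∀ h s a b, (∀ s', 0 ≤ P h s a b s') ∧ ∑ s', P h s a b s' = 1)

/-- The optimistic (`sgn = 1`) / pessimistic (`sgn = -1`) value functions of the
algorithm, defined by backward recursion on the number `t` of remaining steps:
`Vrec … t s` is `V̄`/`V̲` at step `h = H + 1 - t`. -/
noncomputable def Vrec {S A B : Type*} [Fintype S] [Fintype A] [Fintype B] {d : ℕ}
    (H : ℕ) (r : ℕ → S → A → B → ℝ) (φ : S → A → B → S → Fin d → ℝ)
    (θ : ℕ → Fin d → ℝ) (Sm : ℕ → Matrix (Fin d) (Fin d) ℝ) (β : ℝ) (sgn : ℝ)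
    (μ : ℕ → S → A → B → ℝ) : ℕ → S → ℝ
  | 0, _ => 0
  | t+1, s =>
      ∑ a, ∑ b, μ (H - t) s a b *
        clip (-(H : ℝ)) H (r (H - t) s a b
          + ((∑ s', Vrec H r φ θ Sm β sgn μ t s' • φ s a b s') ⬝ᵥ θ (H - t))
          + sgn * β * wnorm (Sm (H - t))⁻¹
              (∑ s', Vrec H r φ θ Sm β sgn μ t s' • φ s a b s'))

/-- The optimistic (`sgn = 1`) / pessimistic (`sgn = -1`) action-value estimate
`Q̄_h`/`Q̲_h` of the algorithm (it uses `V̄_{h+1}` = `Vrec … (H - h)`). -/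
noncomputable def Qrec {S A B : Type*} [Fintype S] [Fintype A] [Fintype B] {d : ℕ}
    (H : ℕ) (r : ℕ → S → A → B → ℝ) (φ : S → A → B → S → Fin d → ℝ)
    (θ : ℕ → Fin d → ℝ) (Sm : ℕ → Matrix (Fin d) (Fin d) ℝ) (β : ℝ) (sgn : ℝ)
    (μ : ℕ → S → A → B → ℝ) (h : ℕ) (s : S) (a : A) (b : B) : ℝ :=
  clip (-(H : ℝ)) H (r h s a b
    + ((∑ s', Vrec H r φ θ Sm β sgn μ (H - h) s' • φ s a b s') ⬝ᵥ θ h)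
    + sgn * β * wnorm (Sm h)⁻¹
        (∑ s', Vrec H r φ θ Sm β sgn μ (H - h) s' • φ s a b s'))

/-- `V̄_h`/`V̲_h` as a function of the step index `h`. -/
noncomputable def VrecAt {S A B : Type*} [Fintype S] [Fintype A] [Fintype B] {d : ℕ}
    (H : ℕ) (r : ℕ → S → A → B → ℝ) (φ : S → A → B → S → Fin d → ℝ)
    (θ : ℕ → Fin d → ℝ) (Sm : ℕ → Matrix (Fin d) (Fin d) ℝ) (β : ℝ) (sgn : ℝ)
    (μ : ℕ → S → A → B → ℝ) (h : ℕ) (s : S) : ℝ :=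
  Vrec H r φ θ Sm β sgn μ (H + 1 - h) s

/-- Value `V^μ` of the correlated joint policy `μ`, by backward recursion on the number
`t` of remaining steps: `Vmu … t s` is `V^μ` at step `h = H + 1 - t`. -/
noncomputable def Vmu {S A B : Type*} [Fintype S] [Fintype A] [Fintype B]
    (H : ℕ) (r : ℕ → S → A → B → ℝ) (P : ℕ → S → A → B → S → ℝ)
    (μ : ℕ → S → A → B → ℝ) : ℕ → S → ℝ
  | 0, _ => 0
  | t+1, s =>
      ∑ a, ∑ b, μ (H - t) s a b *
        (r (H - t) s a b + ∑ s', P (H - t) s a b s' * Vmu H r P μ t s')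

/-- Action-value `Q^μ_h(s,a,b)` of the correlated joint policy `μ`. -/
noncomputable def Qmu {S A B : Type*} [Fintype S] [Fintype A] [Fintype B]
    (H : ℕ) (r : ℕ → S → A → B → ℝ) (P : ℕ → S → A → B → S → ℝ)
    (μ : ℕ → S → A → B → ℝ) (h : ℕ) (s : S) (a : A) (b : B) : ℝ :=
  r h s a b + ∑ s', P h s a b s' * Vmu H r P μ (H - h) s'

/-! The true value is sandwiched by backward induction on the step. At step `h`, the model
expectation `∑ P_h V = ⟨θ*_h, φ_V⟩` differs from the estimate `⟨θ̄_h, φ_V⟩` by at most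
`‖θ̄_h - θ*_h‖_{Σ̄_h} ‖φ_V‖_{Σ̄_h⁻¹} ≤ β ‖φ_V‖_{Σ̄_h⁻¹}` (Cauchy–Schwarz in the geometry of `Σ̄_h`),
which is exactly the bonus; since `P_h ≥ 0`, the bounds on `V_{h+1}` carry over to the
expectations. Clipping to `[-H, H]` is harmless because the true action value already lies
there. -/

lemma clip_mono {l u x y : ℝ} (h : x ≤ y) : clip l u x ≤ clip l u y :=
  max_le_max le_rfl (min_le_min h le_rfl)

lemma clip_neg_self_of_abs_le {u x : ℝ} (h : |x| ≤ u) : clip (-u) u x = x := by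
  rw [clip, min_eq_left (abs_le.mp h).2, max_eq_right (abs_le.mp h).1]

lemma abs_dotProduct_le_wnorm_inv_mul_wnorm {d : ℕ} {M : Matrix (Fin d) (Fin d) ℝ}
    (hM : M.PosDef) (x y : Fin d → ℝ) : |x ⬝ᵥ y| ≤ wnorm M⁻¹ x * wnorm M y := by
  set u := M⁻¹ *ᵥ x
  have hsymm : Mᵀ = M := (isHermitian_iff_isSymm.mp hM.isHermitian).eq
  have hMu : M *ᵥ u = x := by
    rw [mulVec_mulVec, mul_nonsing_inv _ ((isUnit_iff_isUnit_det M).mp hM.isUnit), one_mulVec]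
  have hcs := (toBilin' M).apply_mul_apply_le_of_forall_zero_le
    (fun v => by simpa [toBilin'_apply'] using hM.posSemidef.dotProduct_mulVec_nonneg v) u y
  have huy : u ⬝ᵥ M *ᵥ y = x ⬝ᵥ y := by
    rw [dotProduct_mulVec, ← mulVec_transpose, hsymm, hMu]
  simp only [toBilin'_apply', huy, hMu, dotProduct_comm y x, dotProduct_comm u x] at hcs
  have hx : 0 ≤ x ⬝ᵥ M⁻¹ *ᵥ x := by
    simpa using hM.inv.posSemidef.dotProduct_mulVec_nonneg x
  rw [wnorm, wnorm, ← Real.sqrt_mul hx]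
  exact Real.abs_le_sqrt (by rwa [sq])

lemma abs_dotProduct_sub_le_of_wnorm_le {d : ℕ} {M : Matrix (Fin d) (Fin d) ℝ} (hM : M.PosDef)
    {θ θ' : Fin d → ℝ} {β : ℝ} (hθ : wnorm M (θ - θ') ≤ β) (y : Fin d → ℝ) :
    |y ⬝ᵥ θ - y ⬝ᵥ θ'| ≤ β * wnorm M⁻¹ y :=
  calc |y ⬝ᵥ θ - y ⬝ᵥ θ'| = |y ⬝ᵥ (θ - θ')| := by rw [dotProduct_sub]
    _ ≤ wnorm M⁻¹ y * wnorm M (θ - θ') := abs_dotProduct_le_wnorm_inv_mul_wnorm hM y _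
    _ ≤ wnorm M⁻¹ y * β := mul_le_mul_of_nonneg_left hθ (Real.sqrt_nonneg _)
    _ = β * wnorm M⁻¹ y := mul_comm _ _

lemma sum_mul_eq_sum_smul_dotProduct {S : Type*} [Fintype S] {d : ℕ} {p : S → ℝ}
    {φ : S → Fin d → ℝ} {θ : Fin d → ℝ} (hp : ∀ s, p s = φ s ⬝ᵥ θ) (V : S → ℝ) :
    ∑ s, p s * V s = (∑ s, V s • φ s) ⬝ᵥ θ := by
  simp only [sum_dotProduct, smul_dotProduct, hp, smul_eq_mul, mul_comm]

lemma abs_sum_mul_le_of_abs_le {ι : Type*} {s : Finset ι} {w f : ι → ℝ} {c : ℝ}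
    (hw : ∀ i ∈ s, 0 ≤ w i) (hw1 : ∑ i ∈ s, w i = 1) (hf : ∀ i ∈ s, |f i| ≤ c) :
    |∑ i ∈ s, w i * f i| ≤ c :=
  calc |∑ i ∈ s, w i * f i| ≤ ∑ i ∈ s, |w i * f i| := abs_sum_le_sum_abs _ _
    _ ≤ ∑ i ∈ s, w i * c := sum_le_sum fun i hi => by
        rw [abs_mul, abs_of_nonneg (hw i hi)]
        exact mul_le_mul_of_nonneg_left (hf i hi) (hw i hi)
    _ = c := by rw [← sum_mul, hw1, one_mul]

lemma abs_sum_sum_mul_le_of_abs_le {A B : Type*} [Fintype A] [Fintype B] {w f : A → B → ℝ}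
    {c : ℝ} (hw : ∀ a b, 0 ≤ w a b) (hw1 : ∑ a, ∑ b, w a b = 1) (hf : ∀ a b, |f a b| ≤ c) :
    |∑ a, ∑ b, w a b * f a b| ≤ c := by
  rw [← Fintype.sum_prod_type'] at hw1 ⊢
  exact abs_sum_mul_le_of_abs_le (fun x _ => hw x.1 x.2) hw1 fun x _ => hf x.1 x.2

lemma sum_sum_mul_le_sum_sum_mul {A B : Type*} [Fintype A] [Fintype B] {w f g : A → B → ℝ}
    (hw : ∀ a b, 0 ≤ w a b) (hfg : ∀ a b, f a b ≤ g a b) :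
    ∑ a, ∑ b, w a b * f a b ≤ ∑ a, ∑ b, w a b * g a b :=
  sum_le_sum fun a _ => sum_le_sum fun b _ => mul_le_mul_of_nonneg_left (hfg a b) (hw a b)

section Backup

variable {S : Type*} [Fintype S] {d : ℕ} {H r β : ℝ} {p : S → ℝ} {φ : S → Fin d → ℝ}
  {θ θs : Fin d → ℝ} {M : Matrix (Fin d) (Fin d) ℝ} {V W : S → ℝ}

lemma backup_le_clip_optimistic (hM : M.PosDef) (hθ : wnorm M (θ - θs) ≤ β)
    (hp : ∀ s, p s = φ s ⬝ᵥ θs) (hp0 : ∀ s, 0 ≤ p s) (hVW : ∀ s, V s ≤ W s)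
    (hq : |r + ∑ s, p s * V s| ≤ H) :
    r + ∑ s, p s * V s ≤ clip (-H) H
      (r + (∑ s, W s • φ s) ⬝ᵥ θ + β * wnorm M⁻¹ (∑ s, W s • φ s)) := by
  have hmono : ∑ s, p s * V s ≤ ∑ s, p s * W s :=
    sum_le_sum fun s _ => mul_le_mul_of_nonneg_left (hVW s) (hp0 s)
  have herr := abs_le.mp (abs_dotProduct_sub_le_of_wnorm_le hM hθ (∑ s, W s • φ s))
  rw [← sum_mul_eq_sum_smul_dotProduct hp] at herr
  rw [← clip_neg_self_of_abs_le hq]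
  exact clip_mono (by linarith [herr.1])

lemma clip_pessimistic_le_backup (hM : M.PosDef) (hθ : wnorm M (θ - θs) ≤ β)
    (hp : ∀ s, p s = φ s ⬝ᵥ θs) (hp0 : ∀ s, 0 ≤ p s) (hWV : ∀ s, W s ≤ V s)
    (hq : |r + ∑ s, p s * V s| ≤ H) :
    clip (-H) H (r + (∑ s, W s • φ s) ⬝ᵥ θ + -β * wnorm M⁻¹ (∑ s, W s • φ s))
      ≤ r + ∑ s, p s * V s := by
  have hmono : ∑ s, p s * W s ≤ ∑ s, p s * V s :=
    sum_le_sum fun s _ => mul_le_mul_of_nonneg_left (hWV s) (hp0 s)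
  have herr := abs_le.mp (abs_dotProduct_sub_le_of_wnorm_le hM hθ (∑ s, W s • φ s))
  rw [← sum_mul_eq_sum_smul_dotProduct hp] at herr
  rw [← clip_neg_self_of_abs_le hq]
  exact clip_mono (by linarith [herr.2])

end Backup

lemma abs_reward_add_expectation_le {S A B : Type*} [Fintype S] {r : ℕ → S → A → B → ℝ}
    {P : ℕ → S → A → B → S → ℝ} (hGame : IsGame r P) (h : ℕ) (s : S) (a : A) (b : B)
    {V : S → ℝ} {c : ℝ} (hV : ∀ s', |V s'| ≤ c) :
    |r h s a b + ∑ s', P h s a b s' * V s'| ≤ 1 + c :=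
  (abs_add_le _ _).trans <| add_le_add (abs_le.mpr (hGame.1 h s a b)) <|
    abs_sum_mul_le_of_abs_le (fun s' _ => (hGame.2 h s a b).1 s') (hGame.2 h s a b).2
      fun s' _ => hV s'

section Game

variable {S A B : Type*} [Fintype S] [Fintype A] [Fintype B] {d : ℕ} {H : ℕ}
  {r : ℕ → S → A → B → ℝ} {P : ℕ → S → A → B → S → ℝ} {μ : ℕ → S → A → B → ℝ}
  {φ : S → A → B → S → Fin d → ℝ} {β : ℝ}

lemma abs_Vmu_le (hGame : IsGame r P)
    (hμ : ∀ h s, (∀ a b, 0 ≤ μ h s a b) ∧ ∑ a, ∑ b, μ h s a b = 1) (t : ℕ) (s : S) :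
    |Vmu H r P μ t s| ≤ t := by
  induction t generalizing s with
  | zero => simp [Vmu]
  | succ t ih =>
    rw [Vmu, Nat.cast_succ, add_comm]
    exact abs_sum_sum_mul_le_of_abs_le (hμ _ s).1 (hμ _ s).2
      fun a b => abs_reward_add_expectation_le hGame _ s a b ih

lemma abs_Qmu_le (hGame : IsGame r P)
    (hμ : ∀ h s, (∀ a b, 0 ≤ μ h s a b) ∧ ∑ a, ∑ b, μ h s a b = 1)
    {h : ℕ} (h1 : 1 ≤ h) (hH : h ≤ H) (s : S) (a : A) (b : B) :
    |Qmu H r P μ h s a b| ≤ H := by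
  have hsteps : (1 : ℝ) + (H - h : ℕ) ≤ H := by
    rw [add_comm]; exact_mod_cast (show H - h + 1 ≤ H by omega)
  exact (abs_reward_add_expectation_le hGame h s a b (abs_Vmu_le hGame hμ _)).trans hsteps

lemma Vmu_succ_eq {t : ℕ} (ht : t ≤ H) (s : S) :
    Vmu H r P μ (t + 1) s = ∑ a, ∑ b, μ (H - t) s a b * Qmu H r P μ (H - t) s a b := by
  simp only [Vmu, Qmu, Nat.sub_sub_self ht]

lemma Vrec_succ_eq {θ : ℕ → Fin d → ℝ} {Sm : ℕ → Matrix (Fin d) (Fin d) ℝ} {sgn : ℝ} {t : ℕ}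
    (ht : t ≤ H) (s : S) :
    Vrec H r φ θ Sm β sgn μ (t + 1) s
      = ∑ a, ∑ b, μ (H - t) s a b * Qrec H r φ θ Sm β sgn μ (H - t) s a b := by
  simp only [Vrec, Qrec, Nat.sub_sub_self ht]

variable {θs θ : ℕ → Fin d → ℝ} {Sm : ℕ → Matrix (Fin d) (Fin d) ℝ} {h : ℕ}

lemma Qmu_le_Qrec (hGame : IsGame r P) (hmix : ∀ h s a b s', P h s a b s' = φ s a b s' ⬝ᵥ θs h)
    (hμ : ∀ h s, (∀ a b, 0 ≤ μ h s a b) ∧ ∑ a, ∑ b, μ h s a b = 1)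
    (h1 : 1 ≤ h) (hH : h ≤ H) (hM : (Sm h).PosDef) (hθ : wnorm (Sm h) (θ h - θs h) ≤ β)
    (hV : ∀ s, Vmu H r P μ (H - h) s ≤ Vrec H r φ θ Sm β 1 μ (H - h) s) (s : S) (a : A) (b : B) :
    Qmu H r P μ h s a b ≤ Qrec H r φ θ Sm β 1 μ h s a b := by
  rw [Qrec, one_mul]
  exact backup_le_clip_optimistic hM hθ (hmix h s a b) (hGame.2 h s a b).1 hV
    (abs_Qmu_le hGame hμ h1 hH s a b)

lemma Qrec_le_Qmu (hGame : IsGame r P) (hmix : ∀ h s a b s', P h s a b s' = φ s a b s' ⬝ᵥ θs h)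
    (hμ : ∀ h s, (∀ a b, 0 ≤ μ h s a b) ∧ ∑ a, ∑ b, μ h s a b = 1)
    (h1 : 1 ≤ h) (hH : h ≤ H) (hM : (Sm h).PosDef) (hθ : wnorm (Sm h) (θ h - θs h) ≤ β)
    (hV : ∀ s, Vrec H r φ θ Sm β (-1) μ (H - h) s ≤ Vmu H r P μ (H - h) s)
    (s : S) (a : A) (b : B) :
    Qrec H r φ θ Sm β (-1) μ h s a b ≤ Qmu H r P μ h s a b := by
  rw [Qrec, neg_one_mul]
  exact clip_pessimistic_le_backup hM hθ (hmix h s a b) (hGame.2 h s a b).1 hV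
    (abs_Qmu_le hGame hμ h1 hH s a b)

lemma Vrec_le_Vmu_le_Vrec (hGame : IsGame r P)
    (hmix : ∀ h s a b s', P h s a b s' = φ s a b s' ⬝ᵥ θs h)
    (hμ : ∀ h s, (∀ a b, 0 ≤ μ h s a b) ∧ ∑ a, ∑ b, μ h s a b = 1)
    {θb θl : ℕ → Fin d → ℝ} {Sb Sl : ℕ → Matrix (Fin d) (Fin d) ℝ}
    (hSb : ∀ h, (Sb h).PosDef) (hSl : ∀ h, (Sl h).PosDef)
    (hconf : ∀ h, 1 ≤ h → h ≤ H →
      wnorm (Sb h) (θb h - θs h) ≤ β ∧ wnorm (Sl h) (θl h - θs h) ≤ β)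
    {t : ℕ} (ht : t ≤ H) (s : S) :
    Vrec H r φ θl Sl β (-1) μ t s ≤ Vmu H r P μ t s ∧
      Vmu H r P μ t s ≤ Vrec H r φ θb Sb β 1 μ t s := by
  induction t generalizing s with
  | zero => exact ⟨le_rfl, le_rfl⟩
  | succ t ih =>
    have h1 : 1 ≤ H - t := by omega
    have hconf' := hconf (H - t) h1 (Nat.sub_le H t)
    have hV : ∀ s, Vrec H r φ θl Sl β (-1) μ (H - (H - t)) s ≤ Vmu H r P μ (H - (H - t)) s ∧
        Vmu H r P μ (H - (H - t)) s ≤ Vrec H r φ θb Sb β 1 μ (H - (H - t)) s := by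
      rw [Nat.sub_sub_self (by omega)]; exact ih (by omega)
    rw [Vmu_succ_eq (by omega), Vrec_succ_eq (by omega), Vrec_succ_eq (by omega)]
    exact ⟨sum_sum_mul_le_sum_sum_mul (hμ _ s).1 fun a b =>
        Qrec_le_Qmu hGame hmix hμ h1 (Nat.sub_le H t) (hSl _) hconf'.2 (fun s => (hV s).1) s a b,
      sum_sum_mul_le_sum_sum_mul (hμ _ s).1 fun a b =>
        Qmu_le_Qrec hGame hmix hμ h1 (Nat.sub_le H t) (hSb _) hconf'.1 (fun s => (hV s).2) s a b⟩

end Game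

theorem correlated_value_sandwich_general
    {S A B : Type*} [Fintype S] [Fintype A] [Fintype B] {d : ℕ}
    (H : ℕ)
    (r : ℕ → S → A → B → ℝ) (P : ℕ → S → A → B → S → ℝ)
    (hGame : IsGame r P)
    (φ : S → A → B → S → Fin d → ℝ) (θs : ℕ → Fin d → ℝ)
    (hmix : ∀ h s a b s', P h s a b s' = φ s a b s' ⬝ᵥ θs h)
    (β : ℝ)
    (θb θl : ℕ → Fin d → ℝ)
    (Sb Sl : ℕ → Matrix (Fin d) (Fin d) ℝ)
    (hSb : ∀ h, (Sb h).PosDef) (hSl : ∀ h, (Sl h).PosDef)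
    (μ : ℕ → S → A → B → ℝ)
    (hμ : ∀ h s, (∀ a b, 0 ≤ μ h s a b) ∧ ∑ a, ∑ b, μ h s a b = 1)
    (hconf : ∀ h, 1 ≤ h → h ≤ H →
      wnorm (Sb h) (θb h - θs h) ≤ β ∧ wnorm (Sl h) (θl h - θs h) ≤ β) :
    ∀ h, 1 ≤ h → h ≤ H → ∀ (s : S) (a : A) (b : B),
      (Qrec H r φ θl Sl β (-1) μ h s a b ≤ Qmu H r P μ h s a b ∧
        Qmu H r P μ h s a b ≤ Qrec H r φ θb Sb β 1 μ h s a b) ∧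
      (VrecAt H r φ θl Sl β (-1) μ h s ≤ Vmu H r P μ (H + 1 - h) s ∧
        Vmu H r P μ (H + 1 - h) s ≤ VrecAt H r φ θb Sb β 1 μ h s) := by
  intro h h1 hH s a b
  have hnext := fun s => Vrec_le_Vmu_le_Vrec hGame hmix hμ hSb hSl hconf (Nat.sub_le H h) s
  exact ⟨⟨Qrec_le_Qmu hGame hmix hμ h1 hH (hSl h) (hconf h h1 hH).2 (fun s => (hnext s).1) s a b,
      Qmu_le_Qrec hGame hmix hμ h1 hH (hSb h) (hconf h h1 hH).1 (fun s => (hnext s).2) s a b⟩,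
    Vrec_le_Vmu_le_Vrec hGame hmix hμ hSb hSl hconf (by omega : H + 1 - h ≤ H) s⟩

/-- Sandwiching of the correlated-policy value (Lemma B.3): under the confidence-set
conditions, `Q̲_h ≤ Q^μ_h ≤ Q̄_h` and `V̲_h ≤ V^μ_h ≤ V̄_h` for all steps and states. -/
theorem correlated_value_sandwich
    {S A B : Type*} [Fintype S] [Fintype A] [Fintype B]
    [Nonempty S] [Nonempty A] [Nonempty B] {d : ℕ}
    (H : ℕ) (hH : 1 ≤ H)
    (r : ℕ → S → A → B → ℝ) (P : ℕ → S → A → B → S → ℝ)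
    (hGame : IsGame r P)
    (φ : S → A → B → S → Fin d → ℝ) (θs : ℕ → Fin d → ℝ)
    (hmix : ∀ h s a b s', P h s a b s' = φ s a b s' ⬝ᵥ θs h)
    (β : ℝ) (hβ : 0 < β)
    (θb θl : ℕ → Fin d → ℝ)
    (Sb Sl : ℕ → Matrix (Fin d) (Fin d) ℝ)
    (hSb : ∀ h, (Sb h).PosDef) (hSl : ∀ h, (Sl h).PosDef)
    (μ : ℕ → S → A → B → ℝ)
    (hμ : ∀ h s, (∀ a b, 0 ≤ μ h s a b) ∧ ∑ a, ∑ b, μ h s a b = 1)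
    (hconf : ∀ h, 1 ≤ h → h ≤ H →
      wnorm (Sb h) (θb h - θs h) ≤ β ∧ wnorm (Sl h) (θl h - θs h) ≤ β) :
    ∀ h, 1 ≤ h → h ≤ H → ∀ (s : S) (a : A) (b : B),
      (Qrec H r φ θl Sl β (-1) μ h s a b ≤ Qmu H r P μ h s a b ∧
        Qmu H r P μ h s a b ≤ Qrec H r φ θb Sb β 1 μ h s a b) ∧
      (VrecAt H r φ θl Sl β (-1) μ h s ≤ Vmu H r P μ (H + 1 - h) s ∧
        Vmu H r P μ (H + 1 - h) s ≤ VrecAt H r φ θb Sb β 1 μ h s) :=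
  correlated_value_sandwich_general H r P hGame φ θs hmix β θb θl Sb Sl hSb hSl μ hμ hconf
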